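/- Let m and n be integers with n ≥ 2 and m − n ≥ 4 such that m and n have the same parity. Then W = {v_{1,1}, v_{1,n}, v_{m−1,1}, v_{m−1,n}} is a resolving set of the generalized Möbius ladder M_{m,n}; that is, the map sending each vertex v to the 4-tuple (d(v, v_{1,1}), d(v, v_{1,n}), d(v, v_{m−1,1}), d(v, v_{m−1,n})) is injective. -/
import Mathlib


/-- The relation generating the edges of the generalized Möbius ladder `M_{m,n}`:
horizontal edges `{(i,j),(i+1,j)}`, vertical edges `{(i,j),(i,j+1)}`, and the
twisted edges `{(m-1,j),(1,n+1-j)}`. -/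
def gmlRel (m n : ℕ) (u v : ℕ × ℕ) : Prop :=
  (u.2 = v.2 ∧ v.1 = u.1 + 1) ∨
  (u.1 = v.1 ∧ v.2 = u.2 + 1) ∨
  (u.1 = m - 1 ∧ v.1 = 1 ∧ u.2 + v.2 = n + 1)

/-- The vertex set `{(i,j) : 1 ≤ i ≤ m-1, 1 ≤ j ≤ n}` of `M_{m,n}`. -/
abbrev GMLVert (m n : ℕ) : Type :=
  {p : ℕ × ℕ // 1 ≤ p.1 ∧ p.1 ≤ m - 1 ∧ 1 ≤ p.2 ∧ p.2 ≤ n}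

/-- The generalized Möbius ladder `M_{m,n}` as a simple graph. -/
def GML (m n : ℕ) : SimpleGraph (GMLVert m n) :=
  SimpleGraph.fromRel (fun u v => gmlRel m n u.val v.val)

/-- `W` is a resolving set of `M_{m,n}`: distinct vertices have distinct
tuples of distances to the elements of `W`. -/
def IsResolving (m n : ℕ) (W : Set (GMLVert m n)) : Prop :=
  ∀ u v : GMLVert m n,
    (∀ w ∈ W, (GML m n).dist u w = (GML m n).dist v w) → u = v

/-- The metric dimension of `M_{m,n}`: the minimum cardinality of a resolving set. -/
noncomputable def metricDim (m n : ℕ) : ℕ :=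
  sInf {k : ℕ | ∃ W : Finset (GMLVert m n), W.card = k ∧ IsResolving m n ↑W}

open SimpleGraph

section Generic
variable {V : Type*} (G : SimpleGraph V)

lemma gen_upper (c : V) (f : V → ℕ)
    (h0 : ∀ v, f v = 0 → v = c)
    (hstep : ∀ v, 0 < f v → ∃ u, G.Adj v u ∧ f u < f v) :
    ∀ v, G.Reachable v c ∧ G.dist v c ≤ f v := by
  have key : ∀ k v, f v ≤ k → G.Reachable v c ∧ G.dist v c ≤ f v := by
    intro k
    induction k with
    | zero =>
      intro v hv
      have : v = c := h0 v (Nat.le_zero.mp hv)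
      subst this
      exact ⟨Reachable.refl v, by simp [SimpleGraph.dist_self]⟩
    | succ k ih =>
      intro v hv
      rcases Nat.eq_zero_or_pos (f v) with h | h
      · have : v = c := h0 v h
        subst this
        exact ⟨Reachable.refl v, by simp [SimpleGraph.dist_self]⟩
      · obtain ⟨u, hadj, hlt⟩ := hstep v h
        obtain ⟨hr, hd⟩ := ih u (by omega)
        refine ⟨hadj.reachable.trans hr, ?_⟩
        obtain ⟨p, hp⟩ := hr.exists_walk_length_eq_dist
        have := SimpleGraph.dist_le (SimpleGraph.Walk.cons hadj p)
        simp only [SimpleGraph.Walk.length_cons] at this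
        omega
  exact fun v => key (f v) v le_rfl

lemma gen_lower (c : V) (f : V → ℕ) (hc : f c = 0)
    (hlip : ∀ u v, G.Adj u v → f u ≤ f v + 1)
    {v : V} (hr : G.Reachable v c) : f v ≤ G.dist v c := by
  obtain ⟨p, hp⟩ := hr.exists_walk_length_eq_dist
  rw [← hp]
  clear hp hr
  induction p with
  | nil => simp [hc]
  | cons h q ih =>
    have := hlip _ _ h
    simp only [SimpleGraph.Walk.length_cons]
    omega

end Generic

lemma gml_adj_iff {m n : ℕ} (u v : GMLVert m n) :
    (GML m n).Adj u v ↔ u ≠ v ∧ (gmlRel m n u.val v.val ∨ gmlRel m n v.val u.val) := by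
  rw [GML]
  exact SimpleGraph.fromRel_adj _ _ _

lemma gml_adj_mk {m n : ℕ} {i j k l : ℕ} (hu : 1 ≤ i ∧ i ≤ m - 1 ∧ 1 ≤ j ∧ j ≤ n)
    (hv : 1 ≤ k ∧ k ≤ m - 1 ∧ 1 ≤ l ∧ l ≤ n) (hne : ¬(i = k ∧ j = l))
    (h : gmlRel m n (i, j) (k, l) ∨ gmlRel m n (k, l) (i, j)) :
    (GML m n).Adj (⟨(i, j), hu⟩ : GMLVert m n) ⟨(k, l), hv⟩ := by
  rw [gml_adj_iff]
  refine ⟨?_, h⟩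
  intro hh
  rw [Subtype.ext_iff, Prod.ext_iff] at hh
  exact hne hh

def pot1 (m n : ℕ) (v : GMLVert m n) : ℕ := min (v.val.1 + v.val.2 - 2) (m + n - v.val.1 - v.val.2)

lemma dist_pot1 {m n : ℕ} (hn : 2 ≤ n) (hm : n + 4 ≤ m) (v : GMLVert m n)
    (hc : 1 ≤ 1 ∧ 1 ≤ m - 1 ∧ 1 ≤ 1 ∧ 1 ≤ n) :
    (GML m n).dist v ⟨(1, 1), hc⟩ = pot1 m n v := by
  have h0 : ∀ w : GMLVert m n, pot1 m n w = 0 → w = (⟨(1, 1), hc⟩ : GMLVert m n) := by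
    rintro ⟨⟨i, j⟩, hb⟩ hw
    simp only [pot1] at hw
    exact Subtype.ext (Prod.ext_iff.mpr ⟨by simp at hw ⊢; omega, by simp at hw ⊢; omega⟩)
  have hstep : ∀ w : GMLVert m n, 0 < pot1 m n w →
      ∃ u, (GML m n).Adj w u ∧ pot1 m n u < pot1 m n w := by
    rintro ⟨⟨i, j⟩, hb⟩ hw
    simp only [pot1] at hw
    obtain ⟨h1, h2, h3, h4⟩ := hb
    simp only at h1 h2 h3 h4 hw
    rcases le_or_gt (i + j - 2) (m + n - i - j) with hcse | hcse
    · rcases Nat.lt_or_ge 1 j with hj | hj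
      · refine ⟨⟨(i, j - 1), by omega⟩, gml_adj_mk _ _ (by omega) (Or.inr ?_), ?_⟩
        · simp only [gmlRel, true_and, and_true, eq_self_iff_true, true_or, or_true] <;> omega
        · simp only [pot1]; omega
      · refine ⟨⟨(i - 1, j), by omega⟩, gml_adj_mk _ _ (by omega) (Or.inr ?_), ?_⟩
        · simp only [gmlRel, true_and, and_true, eq_self_iff_true, true_or, or_true] <;> omega
        · simp only [pot1]; omega
    · rcases Nat.lt_or_ge i (m - 1) with hi | hi
      · refine ⟨⟨(i + 1, j), by omega⟩, gml_adj_mk _ _ (by omega) (Or.inl ?_), ?_⟩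
        · simp only [gmlRel, true_and, and_true, eq_self_iff_true, true_or, or_true] <;> omega
        · simp only [pot1]; omega
      · refine ⟨⟨(1, n + 1 - j), by omega⟩, gml_adj_mk _ _ (by omega) (Or.inl ?_), ?_⟩
        · simp only [gmlRel, true_and, and_true, eq_self_iff_true, true_or, or_true] <;> omega
        · simp only [pot1]; omega
  have hlip : ∀ u w : GMLVert m n, (GML m n).Adj u w → pot1 m n u ≤ pot1 m n w + 1 := by
    rintro ⟨⟨i, j⟩, hu⟩ ⟨⟨k, l⟩, hv⟩ hadj
    rw [gml_adj_iff] at hadj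
    obtain ⟨-, h⟩ := hadj
    simp only [gmlRel] at h
    obtain ⟨hu1, hu2, hu3, hu4⟩ := hu
    obtain ⟨hv1, hv2, hv3, hv4⟩ := hv
    simp only at hu1 hu2 hu3 hu4 hv1 hv2 hv3 hv4 h
    simp only [pot1]
    omega
  obtain ⟨hr, hub⟩ := gen_upper (GML m n) _ _ h0 hstep v
  have hlb := gen_lower (GML m n) _ _ (by simp only [pot1]; omega) hlip hr
  omega

def pot2 (m n : ℕ) (v : GMLVert m n) : ℕ := min (v.val.1 - 1 + (n - v.val.2)) (m - v.val.1 + v.val.2 - 1)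

lemma dist_pot2 {m n : ℕ} (hn : 2 ≤ n) (hm : n + 4 ≤ m) (v : GMLVert m n)
    (hc : 1 ≤ 1 ∧ 1 ≤ m - 1 ∧ 1 ≤ n ∧ n ≤ n) :
    (GML m n).dist v ⟨(1, n), hc⟩ = pot2 m n v := by
  have h0 : ∀ w : GMLVert m n, pot2 m n w = 0 → w = (⟨(1, n), hc⟩ : GMLVert m n) := by
    rintro ⟨⟨i, j⟩, hb⟩ hw
    simp only [pot2] at hw
    exact Subtype.ext (Prod.ext_iff.mpr ⟨by simp at hw ⊢; omega, by simp at hw ⊢; omega⟩)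
  have hstep : ∀ w : GMLVert m n, 0 < pot2 m n w →
      ∃ u, (GML m n).Adj w u ∧ pot2 m n u < pot2 m n w := by
    rintro ⟨⟨i, j⟩, hb⟩ hw
    simp only [pot2] at hw
    obtain ⟨h1, h2, h3, h4⟩ := hb
    simp only at h1 h2 h3 h4 hw
    rcases le_or_gt (i - 1 + (n - j)) (m - i + j - 1) with hcse | hcse
    · rcases Nat.lt_or_ge 1 i with hx | hx
      · refine ⟨⟨(i - 1, j), by omega⟩, gml_adj_mk _ _ (by omega) (Or.inr ?_), ?_⟩
        · simp only [gmlRel, true_and, and_true, eq_self_iff_true, true_or, or_true] <;> omega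
        · simp only [pot2]; omega
      · refine ⟨⟨(i, j + 1), by omega⟩, gml_adj_mk _ _ (by omega) (Or.inl ?_), ?_⟩
        · simp only [gmlRel, true_and, and_true, eq_self_iff_true, true_or, or_true] <;> omega
        · simp only [pot2]; omega
    · rcases Nat.lt_or_ge i (m - 1) with hx | hx
      · refine ⟨⟨(i + 1, j), by omega⟩, gml_adj_mk _ _ (by omega) (Or.inl ?_), ?_⟩
        · simp only [gmlRel, true_and, and_true, eq_self_iff_true, true_or, or_true] <;> omega
        · simp only [pot2]; omega
      · refine ⟨⟨(1, n + 1 - j), by omega⟩, gml_adj_mk _ _ (by omega) (Or.inl ?_), ?_⟩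
        · simp only [gmlRel, true_and, and_true, eq_self_iff_true, true_or, or_true] <;> omega
        · simp only [pot2]; omega
  have hlip : ∀ u w : GMLVert m n, (GML m n).Adj u w → pot2 m n u ≤ pot2 m n w + 1 := by
    rintro ⟨⟨i, j⟩, hu⟩ ⟨⟨k, l⟩, hv⟩ hadj
    rw [gml_adj_iff] at hadj
    obtain ⟨-, h⟩ := hadj
    simp only [gmlRel] at h
    obtain ⟨hu1, hu2, hu3, hu4⟩ := hu
    obtain ⟨hv1, hv2, hv3, hv4⟩ := hv
    simp only at hu1 hu2 hu3 hu4 hv1 hv2 hv3 hv4 h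
    simp only [pot2]
    omega
  obtain ⟨hr, hub⟩ := gen_upper (GML m n) _ _ h0 hstep v
  have hlb := gen_lower (GML m n) _ _ (by simp only [pot2]; omega) hlip hr
  omega

def pot3 (m n : ℕ) (v : GMLVert m n) : ℕ := min (m - 1 - v.val.1 + (v.val.2 - 1)) (v.val.1 + (n - v.val.2))

lemma dist_pot3 {m n : ℕ} (hn : 2 ≤ n) (hm : n + 4 ≤ m) (v : GMLVert m n)
    (hc : 1 ≤ m - 1 ∧ m - 1 ≤ m - 1 ∧ 1 ≤ 1 ∧ 1 ≤ n) :
    (GML m n).dist v ⟨(m - 1, 1), hc⟩ = pot3 m n v := by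
  have h0 : ∀ w : GMLVert m n, pot3 m n w = 0 → w = (⟨(m - 1, 1), hc⟩ : GMLVert m n) := by
    rintro ⟨⟨i, j⟩, hb⟩ hw
    simp only [pot3] at hw
    exact Subtype.ext (Prod.ext_iff.mpr ⟨by simp at hw ⊢; omega, by simp at hw ⊢; omega⟩)
  have hstep : ∀ w : GMLVert m n, 0 < pot3 m n w →
      ∃ u, (GML m n).Adj w u ∧ pot3 m n u < pot3 m n w := by
    rintro ⟨⟨i, j⟩, hb⟩ hw
    simp only [pot3] at hw
    obtain ⟨h1, h2, h3, h4⟩ := hb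
    simp only at h1 h2 h3 h4 hw
    rcases le_or_gt (m - 1 - i + (j - 1)) (i + (n - j)) with hcse | hcse
    · rcases Nat.lt_or_ge i (m - 1) with hx | hx
      · refine ⟨⟨(i + 1, j), by omega⟩, gml_adj_mk _ _ (by omega) (Or.inl ?_), ?_⟩
        · simp only [gmlRel, true_and, and_true, eq_self_iff_true, true_or, or_true] <;> omega
        · simp only [pot3]; omega
      · refine ⟨⟨(i, j - 1), by omega⟩, gml_adj_mk _ _ (by omega) (Or.inr ?_), ?_⟩
        · simp only [gmlRel, true_and, and_true, eq_self_iff_true, true_or, or_true] <;> omega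
        · simp only [pot3]; omega
    · rcases Nat.lt_or_ge 1 i with hx | hx
      · refine ⟨⟨(i - 1, j), by omega⟩, gml_adj_mk _ _ (by omega) (Or.inr ?_), ?_⟩
        · simp only [gmlRel, true_and, and_true, eq_self_iff_true, true_or, or_true] <;> omega
        · simp only [pot3]; omega
      · refine ⟨⟨(m - 1, n + 1 - j), by omega⟩, gml_adj_mk _ _ (by omega) (Or.inr ?_), ?_⟩
        · simp only [gmlRel, true_and, and_true, eq_self_iff_true, true_or, or_true] <;> omega
        · simp only [pot3]; omega
  have hlip : ∀ u w : GMLVert m n, (GML m n).Adj u w → pot3 m n u ≤ pot3 m n w + 1 := by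
    rintro ⟨⟨i, j⟩, hu⟩ ⟨⟨k, l⟩, hv⟩ hadj
    rw [gml_adj_iff] at hadj
    obtain ⟨-, h⟩ := hadj
    simp only [gmlRel] at h
    obtain ⟨hu1, hu2, hu3, hu4⟩ := hu
    obtain ⟨hv1, hv2, hv3, hv4⟩ := hv
    simp only at hu1 hu2 hu3 hu4 hv1 hv2 hv3 hv4 h
    simp only [pot3]
    omega
  obtain ⟨hr, hub⟩ := gen_upper (GML m n) _ _ h0 hstep v
  have hlb := gen_lower (GML m n) _ _ (by simp only [pot3]; omega) hlip hr
  omega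

def pot4 (m n : ℕ) (v : GMLVert m n) : ℕ := min (m - 1 - v.val.1 + (n - v.val.2)) (v.val.1 + v.val.2 - 1)

lemma dist_pot4 {m n : ℕ} (hn : 2 ≤ n) (hm : n + 4 ≤ m) (v : GMLVert m n)
    (hc : 1 ≤ m - 1 ∧ m - 1 ≤ m - 1 ∧ 1 ≤ n ∧ n ≤ n) :
    (GML m n).dist v ⟨(m - 1, n), hc⟩ = pot4 m n v := by
  have h0 : ∀ w : GMLVert m n, pot4 m n w = 0 → w = (⟨(m - 1, n), hc⟩ : GMLVert m n) := by
    rintro ⟨⟨i, j⟩, hb⟩ hw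
    simp only [pot4] at hw
    exact Subtype.ext (Prod.ext_iff.mpr ⟨by simp at hw ⊢; omega, by simp at hw ⊢; omega⟩)
  have hstep : ∀ w : GMLVert m n, 0 < pot4 m n w →
      ∃ u, (GML m n).Adj w u ∧ pot4 m n u < pot4 m n w := by
    rintro ⟨⟨i, j⟩, hb⟩ hw
    simp only [pot4] at hw
    obtain ⟨h1, h2, h3, h4⟩ := hb
    simp only at h1 h2 h3 h4 hw
    rcases le_or_gt (m - 1 - i + (n - j)) (i + j - 1) with hcse | hcse
    · rcases Nat.lt_or_ge i (m - 1) with hx | hx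
      · refine ⟨⟨(i + 1, j), by omega⟩, gml_adj_mk _ _ (by omega) (Or.inl ?_), ?_⟩
        · simp only [gmlRel, true_and, and_true, eq_self_iff_true, true_or, or_true] <;> omega
        · simp only [pot4]; omega
      · refine ⟨⟨(i, j + 1), by omega⟩, gml_adj_mk _ _ (by omega) (Or.inl ?_), ?_⟩
        · simp only [gmlRel, true_and, and_true, eq_self_iff_true, true_or, or_true] <;> omega
        · simp only [pot4]; omega
    · rcases Nat.lt_or_ge 1 i with hx | hx
      · refine ⟨⟨(i - 1, j), by omega⟩, gml_adj_mk _ _ (by omega) (Or.inr ?_), ?_⟩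
        · simp only [gmlRel, true_and, and_true, eq_self_iff_true, true_or, or_true] <;> omega
        · simp only [pot4]; omega
      · refine ⟨⟨(m - 1, n + 1 - j), by omega⟩, gml_adj_mk _ _ (by omega) (Or.inr ?_), ?_⟩
        · simp only [gmlRel, true_and, and_true, eq_self_iff_true, true_or, or_true] <;> omega
        · simp only [pot4]; omega
  have hlip : ∀ u w : GMLVert m n, (GML m n).Adj u w → pot4 m n u ≤ pot4 m n w + 1 := by
    rintro ⟨⟨i, j⟩, hu⟩ ⟨⟨k, l⟩, hv⟩ hadj
    rw [gml_adj_iff] at hadj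
    obtain ⟨-, h⟩ := hadj
    simp only [gmlRel] at h
    obtain ⟨hu1, hu2, hu3, hu4⟩ := hu
    obtain ⟨hv1, hv2, hv3, hv4⟩ := hv
    simp only at hu1 hu2 hu3 hu4 hv1 hv2 hv3 hv4 h
    simp only [pot4]
    omega
  obtain ⟨hr, hub⟩ := gen_upper (GML m n) _ _ h0 hstep v
  have hlb := gen_lower (GML m n) _ _ (by simp only [pot4]; omega) hlip hr
  omega

set_option maxHeartbeats 1600000 in
theorem stmt11 (m n : ℕ) (hn : 2 ≤ n) (hm : n + 4 ≤ m)
    (hpar : (Even m ∧ Even n) ∨ (Odd m ∧ Odd n)) :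
    Function.Injective (fun v : GMLVert m n =>
      ((GML m n).dist v ⟨(1, 1), by omega⟩,
       (GML m n).dist v ⟨(1, n), by omega⟩,
       (GML m n).dist v ⟨(m - 1, 1), by omega⟩,
       (GML m n).dist v ⟨(m - 1, n), by omega⟩)) := by
  intro u v h
  simp only [Prod.mk.injEq] at h
  obtain ⟨e1, e2, e3, e4⟩ := h
  rw [dist_pot1 hn hm u, dist_pot1 hn hm v] at e1
  rw [dist_pot2 hn hm u, dist_pot2 hn hm v] at e2
  rw [dist_pot3 hn hm u, dist_pot3 hn hm v] at e3
  rw [dist_pot4 hn hm u, dist_pot4 hn hm v] at e4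
  obtain ⟨⟨i, j⟩, hu⟩ := u
  obtain ⟨⟨k, l⟩, hv⟩ := v
  simp only [pot1, pot2, pot3, pot4] at e1 e2 e3 e4
  obtain ⟨hu1, hu2, hu3, hu4⟩ := hu
  obtain ⟨hv1, hv2, hv3, hv4⟩ := hv
  simp only at hu1 hu2 hu3 hu4 hv1 hv2 hv3 hv4 e1 e2 e3 e4
  have hA : i + j = k + l := by
    clear e2 e3
    rcases hpar with ⟨⟨a, ha⟩, ⟨b, hb⟩⟩ | ⟨⟨a, ha⟩, ⟨b, hb⟩⟩ <;> omega
  have hB : i + l = k + j := by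
    clear e1 e4 hA
    rcases hpar with ⟨⟨a, ha⟩, ⟨b, hb⟩⟩ | ⟨⟨a, ha⟩, ⟨b, hb⟩⟩ <;> omega
  clear e1 e2 e3 e4
  exact Subtype.ext (Prod.ext_iff.mpr ⟨show i = k by omega, show j = l by omega⟩)
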